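/- arXiv:1805.02057 — 4 statements merged into one kernel-verified Lean document; each statement's English description precedes it below -/
import Mathlib

section
/- Fix a simple root α and i ≥ 1, and let Δ_α(i) = {γ ∈ Δ⁺ : ht_α(γ) = i}, where ht_α(γ) is the coefficient of α in γ. If Δ_α(i) is nonempty, then it is a modular lattice under the root order: it has a unique minimal element, a unique maximal element, and for γ₁, γ₂ ∈ Δ_α(i) both min(γ₁,γ₂) and max(γ₁,γ₂) (coefficientwise) are roots in Δ_α(i), giving meet and join. -/
open scoped RealInnerProductSpace

/-- Combinatorial data of the set of positive roots of a (reduced, irreducible,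
crystallographic) root system of a simple Lie algebra, with a chosen set of
simple roots, sitting in a real inner product space `V`. -/
structure SimpleRS (V : Type*) [NormedAddCommGroup V] [InnerProductSpace ℝ V] where
  /-- the positive roots Δ⁺ -/
  pos : Finset V
  /-- the simple roots Π -/
  simple : Finset V
  simple_sub : simple ⊆ pos
  indep : LinearIndependent ℝ (fun α : {x // x ∈ simple} => (α : V))
  root_ne : ∀ γ ∈ pos, γ ≠ (0 : V)
  /-- `coeff γ α` is the coefficient of the simple root `α` in `γ` -/
  coeff : V → V → ℕ
  coeff_spec : ∀ γ ∈ pos, γ = ∑ α ∈ simple, (coeff γ α : ℝ) • α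
  /-- the reflection of a root in a root is again a root (positive or negative) -/
  reflect_mem : ∀ α ∈ pos, ∀ γ ∈ pos,
    (γ - (2 * ⟪γ, α⟫ / ⟪α, α⟫) • α ∈ pos ∨ -(γ - (2 * ⟪γ, α⟫ / ⟪α, α⟫) • α) ∈ pos)
  crystallographic : ∀ α ∈ pos, ∀ γ ∈ pos, ∃ z : ℤ, 2 * ⟪γ, α⟫ / ⟪α, α⟫ = (z : ℝ)
  reduced : ∀ α ∈ pos, (2 : ℝ) • α ∉ pos
  /-- irreducibility: the Dynkin diagram is connected -/
  irreducible : ∀ S ⊆ simple, (∀ α ∈ S, ∀ β ∈ simple, β ∉ S → ⟪α, β⟫ = 0) →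
      S = ∅ ∨ S = simple
  /-- the highest root θ -/
  highest : V
  highest_mem : highest ∈ pos
  highest_spec : ∀ γ ∈ pos, ∃ c : V → ℕ, highest - γ = ∑ α ∈ simple, (c α : ℝ) • α

namespace SimpleRS

variable {V : Type*} [NormedAddCommGroup V] [InnerProductSpace ℝ V] (R : SimpleRS V)

/-- the root order: `μ ≼ ν` iff `ν − μ` is a nonnegative integral combination
of simple roots -/
def rle (μ ν : V) : Prop := ∃ c : V → ℕ, ν - μ = ∑ α ∈ R.simple, (c α : ℝ) • α

/-- the support of a root: simple roots occurring with nonzero coefficient -/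
def supp (γ : V) : Set V := {α | α ∈ R.simple ∧ R.coeff γ α ≠ 0}

/-- the height of a root -/
def ht (γ : V) : ℕ := ∑ α ∈ R.simple, R.coeff γ α

/-- the root system is of type `A_n`: its Dynkin diagram is a simply laced chain -/
def IsTypeA : Prop :=
  ∃ (n : ℕ) (e : Fin n ≃ {x // x ∈ R.simple}),
    (∀ i j : Fin n, ⟪(e i : V), (e j : V)⟫ ≠ 0 ↔ ((i : ℤ) - (j : ℤ)).natAbs ≤ 1) ∧
    (∀ i j : Fin n, ‖(e i : V)‖ = ‖(e j : V)‖)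

/-- all roots have the same length -/
def SimplyLaced : Prop := ∀ α ∈ R.pos, ∀ β ∈ R.pos, ‖α‖ = ‖β‖

/-- a positive root `γ` is commutative if the upper ideal it generates is abelian,
i.e. no two of its elements sum to a root -/
def IsCom (γ : V) : Prop :=
  ∀ ν₁ ∈ R.pos, ∀ ν₂ ∈ R.pos, R.rle γ ν₁ → R.rle γ ν₂ →
    ν₁ + ν₂ ∉ R.pos ∧ -(ν₁ + ν₂) ∉ R.pos

/-- the coefficientwise floor `⌊θ/2⌋` of half the highest root -/
def floorTheta : V := ∑ α ∈ R.simple, ((R.coeff R.highest α / 2 : ℕ) : ℝ) • α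

end SimpleRS

/-!
Work in the root system `Φ = Δ⁺ ∪ -Δ⁺`, with roots written in integer coordinates with respect
to the simple roots. Negation maps the layer `{f ∈ Φ : f α = i}` to the layer of `-i` and turns
`⊔` into `⊓`, so it suffices to show that a layer with `i ≠ 0` is closed under `⊓`. Everything
rests on two facts about non-proportional roots `a, b`: if `⟪a, b⟫ > 0` then `a - b ∈ Φ`, and if
`⟪a, b⟫ < 0` then `a + b ∈ Φ`.

The proof is by induction on the `ℓ¹`-distance of `f` and `g`. If `f` exceeds `g` at a simple
root `β` with `⟪f, β⟫ > 0`, then `f - β` is a closer root with the same meet. Otherwise write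
`f = f ⊓ g + u` and `g = f ⊓ g + w`. Then `⟪u, g⟫ < 0`, so some `β` in the support of `u` can be
added to `g`. If `u` has height at least `2`, two applications of the induction hypothesis give
first `f ⊓ g + β` and then `f ⊓ g`. The remaining case `f = m + β₁`, `g = m + β₂` cannot occur,
because the product of the two Cartan integers of a pair of roots is less than `4`.
-/

section SumNatAbs

variable {ι : Type*} [Fintype ι]

def sumNatAbs (h : ι → ℤ) : ℕ := ∑ j, (h j).natAbs

theorem sumNatAbs_neg (h : ι → ℤ) : sumNatAbs (-h) = sumNatAbs h := by
  simp [sumNatAbs]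

theorem sumNatAbs_add_le (a b : ι → ℤ) : sumNatAbs (a + b) ≤ sumNatAbs a + sumNatAbs b := by
  rw [sumNatAbs, sumNatAbs, sumNatAbs, ← Finset.sum_add_distrib]
  exact Finset.sum_le_sum fun j _ => Int.natAbs_add_le _ _

theorem sumNatAbs_sub_eq_add_inf (f g : ι → ℤ) :
    sumNatAbs (f - g) = sumNatAbs (f - f ⊓ g) + sumNatAbs (g - f ⊓ g) := by
  rw [sumNatAbs, sumNatAbs, sumNatAbs, ← Finset.sum_add_distrib]
  refine Finset.sum_congr rfl fun j _ => ?_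
  simp only [Pi.sub_apply, Pi.inf_apply]
  omega

variable [DecidableEq ι]

theorem sumNatAbs_single (j : ι) : sumNatAbs (Pi.single j (1 : ℤ)) = 1 := by
  simp [sumNatAbs, Pi.single_apply, apply_ite Int.natAbs]

theorem sumNatAbs_sub_single_lt {h : ι → ℤ} {j : ι} (hj : 0 < h j) :
    sumNatAbs (h - Pi.single j 1) < sumNatAbs h := by
  refine Finset.sum_lt_sum (fun k _ => ?_) ⟨j, Finset.mem_univ j, ?_⟩
  · rcases eq_or_ne k j with rfl | hk
    · simp only [Pi.sub_apply, Pi.single_eq_same]; omega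
    · simp [hk]
  · simp only [Pi.sub_apply, Pi.single_eq_same]; omega

theorem exists_eq_single_of_sumNatAbs_lt_two {h : ι → ℤ} (h0 : 0 ≤ h) (hne : h ≠ 0)
    (h2 : sumNatAbs h < 2) : ∃ j, h = Pi.single j 1 := by
  obtain ⟨j, hj⟩ := Function.ne_iff.mp hne
  have hsplit := Finset.add_sum_erase Finset.univ (fun k => (h k).natAbs) (Finset.mem_univ j)
  refine ⟨j, funext fun k => ?_⟩
  have hk0 : 0 ≤ h k := h0 k
  rcases eq_or_ne k j with rfl | hk
  · simp only [Pi.single_eq_same, Pi.zero_apply] at hj ⊢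
    rw [sumNatAbs] at h2
    omega
  · have := Finset.single_le_sum (f := fun k => (h k).natAbs) (fun _ _ => Nat.zero_le _)
      (Finset.mem_erase.mpr ⟨hk, Finset.mem_univ k⟩)
    simp only [Pi.single_apply, hk, if_false, Pi.zero_apply] at this hj ⊢
    rw [sumNatAbs] at h2
    omega

end SumNatAbs

theorem Int.abs_eq_one_or_abs_eq_one_of_mul_lt_four {m n : ℤ} (hpos : 0 < m * n)
    (hlt : m * n < 4) : |m| = 1 ∨ |n| = 1 := by
  by_contra! hne
  have hm : 2 ≤ |m| := by
    have := abs_pos.mpr (left_ne_zero_of_mul hpos.ne'); omega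
  have hn : 2 ≤ |n| := by
    have := abs_pos.mpr (right_ne_zero_of_mul hpos.ne'); omega
  have : 4 ≤ |m * n| := by rw [abs_mul]; nlinarith
  rw [abs_of_pos hpos] at this
  omega

theorem real_inner_sq_lt_of_ne_smul {V : Type*} [NormedAddCommGroup V] [InnerProductSpace ℝ V]
    {a b : V} (hb : b ≠ 0) (hab : ∀ c : ℝ, a ≠ c • b) : ⟪a, b⟫ ^ 2 < ⟪a, a⟫ * ⟪b, b⟫ := by
  have ha : a ≠ 0 := fun h => hab 0 (by rw [h, zero_smul])
  have hlt : |⟪b, a⟫| < ‖b‖ * ‖a‖ := by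
    refine (abs_real_inner_le_norm b a).lt_of_ne fun h => ?_
    obtain ⟨r, -, hr⟩ := (norm_inner_eq_norm_iff (𝕜 := ℝ) hb ha).mp (by rwa [Real.norm_eq_abs])
    exact hab r hr
  rw [real_inner_comm, ← sq_abs, real_inner_self_eq_norm_sq, real_inner_self_eq_norm_sq,
    ← mul_pow, mul_comm ‖a‖]
  exact pow_lt_pow_left₀ hlt (abs_nonneg _) two_ne_zero

namespace SimpleRS

open scoped Classical

variable {V : Type*} [NormedAddCommGroup V] [InnerProductSpace ℝ V] (R : SimpleRS V)

def comb (f : R.simple → ℤ) : V := ∑ β, (f β : ℝ) • (β : V)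

def coeffs (γ : V) : R.simple → ℤ := fun β => R.coeff γ β

def roots : Set V := {x | x ∈ R.pos ∨ -x ∈ R.pos}

variable {R}

theorem comb_add (f g : R.simple → ℤ) : R.comb (f + g) = R.comb f + R.comb g := by
  simp only [comb, Pi.add_apply, Int.cast_add, add_smul, Finset.sum_add_distrib]

theorem comb_neg (f : R.simple → ℤ) : R.comb (-f) = -R.comb f := by
  simp only [comb, Pi.neg_apply, Int.cast_neg, neg_smul, Finset.sum_neg_distrib]

theorem comb_sub (f g : R.simple → ℤ) : R.comb (f - g) = R.comb f - R.comb g := by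
  rw [sub_eq_add_neg, comb_add, comb_neg, ← sub_eq_add_neg]

theorem comb_zero : R.comb 0 = 0 := by simp [comb]

theorem comb_single (β : R.simple) : R.comb (Pi.single β 1) = β := by
  simp [comb, Pi.single_apply]

theorem comb_coeffs {γ : V} (hγ : γ ∈ R.pos) : R.comb (R.coeffs γ) = γ := by
  conv_rhs => rw [R.coeff_spec γ hγ, ← Finset.sum_coe_sort]
  simp [comb, coeffs]

theorem inner_comb_left (f : R.simple → ℤ) (x : V) :
    ⟪R.comb f, x⟫ = ∑ β, (f β : ℝ) * ⟪(β : V), x⟫ := by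
  simp only [comb, sum_inner, real_inner_smul_left]

theorem eq_smul_of_comb_eq_smul_comb {f g : R.simple → ℤ} {c : ℝ}
    (h : R.comb f = c • R.comb g) (β : R.simple) : (f β : ℝ) = c * g β := by
  have hinj := linearIndependent_iff_injective_fintypeLinearCombination.mp R.indep
  refine congrFun (@hinj (fun β => (f β : ℝ)) (fun β => c * g β) ?_) β
  simp only [Fintype.linearCombination_apply, mul_smul, ← Finset.smul_sum]
  exact h

theorem comb_injective : Function.Injective R.comb := fun f g h => by
  ext β
  exact_mod_cast (eq_smul_of_comb_eq_smul_comb (c := 1) (by rw [h, one_smul]) β).trans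
    (one_mul _)

theorem coeffs_comb {f : R.simple → ℤ} (h : R.comb f ∈ R.pos) : R.coeffs (R.comb f) = f :=
  comb_injective (comb_coeffs h)

theorem comb_ne_smul_comb {f g : R.simple → ℤ} {α : R.simple} (hf : f α ≠ 0) (hg : g α = 0)
    (c : ℝ) : R.comb f ≠ c • R.comb g := fun h => by
  have := eq_smul_of_comb_eq_smul_comb h α
  rw [hg, Int.cast_zero, mul_zero] at this
  exact hf (by exact_mod_cast this)

theorem eq_of_comb_eq_smul_comb {f g : R.simple → ℤ} {α : R.simple} {c : ℝ}
    (h : R.comb f = c • R.comb g) (hfg : f α = g α) (hg : g α ≠ 0) : f = g := by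
  have hc : c = 1 := by
    have := eq_smul_of_comb_eq_smul_comb h α
    rw [hfg] at this
    exact (mul_eq_right₀ (by exact_mod_cast hg)).mp this.symm
  ext β
  have := eq_smul_of_comb_eq_smul_comb h β
  rw [hc, one_mul] at this
  exact_mod_cast this

theorem neg_mem_roots {x : V} : -x ∈ R.roots ↔ x ∈ R.roots := by
  simp only [roots, Set.mem_ofPred_eq, neg_neg, or_comm]

theorem mem_roots_iff {x : V} : x ∈ R.roots ↔ ∃ y ∈ R.pos, x = y ∨ x = -y := by
  refine ⟨fun h => h.elim (fun h => ⟨x, h, .inl rfl⟩) fun h => ⟨-x, h, .inr (neg_neg x).symm⟩,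
    ?_⟩
  rintro ⟨y, hy, rfl | rfl⟩
  · exact Or.inl hy
  · exact Or.inr ((neg_neg y).symm ▸ hy)

theorem simple_mem_roots (β : R.simple) : (β : V) ∈ R.roots := Or.inl (R.simple_sub β.2)

theorem ne_zero_of_mem_roots {x : V} (h : x ∈ R.roots) : x ≠ 0 := by
  rintro rfl
  rcases h with h | h
  · exact R.root_ne 0 h rfl
  · exact R.root_ne _ h neg_zero

theorem reflection_mem_roots {a b : V} (ha : a ∈ R.roots) (hb : b ∈ R.roots) :
    b - (2 * ⟪b, a⟫ / ⟪a, a⟫) • a ∈ R.roots := by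
  have neg_left : ∀ a b : V,
      b - (2 * ⟪b, -a⟫ / ⟪-a, -a⟫) • -a = b - (2 * ⟪b, a⟫ / ⟪a, a⟫) • a := by
    intro a b
    simp only [inner_neg_left, inner_neg_right, neg_neg, mul_neg, neg_div, neg_smul, smul_neg]
  have neg_right : ∀ a b : V,
      -b - (2 * ⟪-b, a⟫ / ⟪a, a⟫) • a = -(b - (2 * ⟪b, a⟫ / ⟪a, a⟫) • a) := by
    intro a b
    simp only [inner_neg_left, mul_neg, neg_div, neg_smul, sub_neg_eq_add, neg_sub]
    abel
  obtain ⟨a, ha', rfl | rfl⟩ := R.mem_roots_iff.mp ha <;>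
    obtain ⟨b, hb', rfl | rfl⟩ := R.mem_roots_iff.mp hb
  · exact R.reflect_mem _ ha' _ hb'
  · rw [neg_right, neg_mem_roots]; exact R.reflect_mem _ ha' _ hb'
  · rw [neg_left]; exact R.reflect_mem _ ha' _ hb'
  · rw [neg_left, neg_right, neg_mem_roots]; exact R.reflect_mem _ ha' _ hb'

theorem exists_int_eq_cartan {a b : V} (ha : a ∈ R.roots) (hb : b ∈ R.roots) :
    ∃ z : ℤ, 2 * ⟪b, a⟫ / ⟪a, a⟫ = z := by
  obtain ⟨a, ha', rfl | rfl⟩ := R.mem_roots_iff.mp ha <;>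
    obtain ⟨b, hb', rfl | rfl⟩ := R.mem_roots_iff.mp hb <;>
    obtain ⟨z, hz⟩ := R.crystallographic _ ha' _ hb'
  · exact ⟨z, hz⟩
  · exact ⟨-z, by rw [inner_neg_left, Int.cast_neg, ← hz]; ring⟩
  · exact ⟨-z, by rw [inner_neg_right, inner_neg_neg, Int.cast_neg, ← hz]; ring⟩
  · exact ⟨z, by rw [inner_neg_neg, inner_neg_neg, hz]⟩

theorem two_mul_abs_inner_eq {a b : V} (ha : a ∈ R.roots) (hb : b ∈ R.roots)
    (hab : ∀ c : ℝ, a ≠ c • b) (h : ⟪a, b⟫ ≠ 0) :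
    2 * |⟪a, b⟫| = ⟪a, a⟫ ∨ 2 * |⟪a, b⟫| = ⟪b, b⟫ := by
  have haa : 0 < ⟪a, a⟫ := real_inner_self_pos.mpr (R.ne_zero_of_mem_roots ha)
  have hbb : 0 < ⟪b, b⟫ := real_inner_self_pos.mpr (R.ne_zero_of_mem_roots hb)
  obtain ⟨z₁, hz₁⟩ := R.exists_int_eq_cartan ha hb
  obtain ⟨z₂, hz₂⟩ := R.exists_int_eq_cartan hb ha
  rw [real_inner_comm] at hz₁
  -- the product of the two Cartan integers is `4 cos² ∈ (0, 4)`
  have hprod : ((z₁ * z₂ : ℤ) : ℝ) = 4 * ⟪a, b⟫ ^ 2 / (⟪a, a⟫ * ⟪b, b⟫) := by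
    push_cast
    rw [← hz₁, ← hz₂]
    field_simp
    ring
  have hpos : 0 < z₁ * z₂ := by
    have : (0 : ℝ) < (z₁ * z₂ : ℤ) := by rw [hprod]; positivity
    exact_mod_cast this
  have hlt : z₁ * z₂ < 4 := by
    have : ((z₁ * z₂ : ℤ) : ℝ) < 4 := by
      rw [hprod, div_lt_iff₀ (by positivity)]
      nlinarith [real_inner_sq_lt_of_ne_smul (R.ne_zero_of_mem_roots hb) hab]
    exact_mod_cast this
  have of_abs_eq_one : ∀ {c : V} {z : ℤ}, 0 < ⟪c, c⟫ → 2 * ⟪a, b⟫ / ⟪c, c⟫ = z → |z| = 1 →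
      2 * |⟪a, b⟫| = ⟪c, c⟫ := by
    intro c z hc hz h1
    have : |(z : ℝ)| = 1 := by exact_mod_cast h1
    rwa [← hz, abs_div, abs_mul, abs_two, abs_of_pos hc, div_eq_one_iff_eq hc.ne'] at this
  exact (Int.abs_eq_one_or_abs_eq_one_of_mul_lt_four hpos hlt).imp
    (of_abs_eq_one haa hz₁) (of_abs_eq_one hbb hz₂)

theorem sub_mem_roots {a b : V} (ha : a ∈ R.roots) (hb : b ∈ R.roots)
    (hab : ∀ c : ℝ, a ≠ c • b) (h : 0 < ⟪a, b⟫) : a - b ∈ R.roots := by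
  rcases R.two_mul_abs_inner_eq ha hb hab h.ne' with h' | h' <;> rw [abs_of_pos h] at h'
  · have := R.reflection_mem_roots ha hb
    rw [real_inner_comm, h', div_self (real_inner_self_pos.mpr (R.ne_zero_of_mem_roots ha)).ne',
      one_smul] at this
    rwa [← neg_mem_roots, neg_sub]
  · have := R.reflection_mem_roots hb ha
    rwa [h', div_self (real_inner_self_pos.mpr (R.ne_zero_of_mem_roots hb)).ne',
      one_smul] at this

theorem add_mem_roots {a b : V} (ha : a ∈ R.roots) (hb : b ∈ R.roots)
    (hab : ∀ c : ℝ, a ≠ c • b) (h : ⟪a, b⟫ < 0) : a + b ∈ R.roots := by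
  rw [← sub_neg_eq_add]
  refine R.sub_mem_roots ha (R.neg_mem_roots.mpr hb) (fun c hc => hab (-c) ?_) ?_
  · rw [hc, neg_smul, smul_neg]
  · rwa [inner_neg_right, neg_pos]

theorem nonneg_of_comb_mem_pos {f : R.simple → ℤ} (h : R.comb f ∈ R.pos) : 0 ≤ f :=
  coeffs_comb h ▸ fun _ => Int.natCast_nonneg _

theorem nonneg_or_nonpos_of_comb_mem_roots {f : R.simple → ℤ} (h : R.comb f ∈ R.roots) :
    0 ≤ f ∨ f ≤ 0 := by
  rcases h with h | h
  · exact .inl (nonneg_of_comb_mem_pos h)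
  · rw [← comb_neg] at h
    exact .inr (neg_nonneg.mp (nonneg_of_comb_mem_pos h))

theorem inner_simple_nonpos {β β' : R.simple} (h : β ≠ β') : ⟪(β : V), β'⟫ ≤ 0 := by
  by_contra! hpos
  have hmem := R.sub_mem_roots (R.simple_mem_roots β) (R.simple_mem_roots β')
    (fun c => by
      rw [← comb_single β, ← comb_single β']
      exact comb_ne_smul_comb (α := β) (by simp) (by simp [Ne.symm h]) c) hpos
  rw [← comb_single β, ← comb_single β', ← comb_sub] at hmem
  rcases R.nonneg_or_nonpos_of_comb_mem_roots hmem with h' | h'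
  · simpa [Ne.symm h] using h' β'
  · simpa [h] using h' β

theorem exists_pos_and_inner_neg {u : R.simple → ℤ} {x : V} (hu : 0 ≤ u)
    (h : ⟪R.comb u, x⟫ < 0) : ∃ β, 0 < u β ∧ ⟪x, (β : V)⟫ < 0 := by
  by_contra! hcon
  rw [inner_comb_left] at h
  refine h.not_ge (Finset.sum_nonneg fun β _ => ?_)
  rcases (hu β).eq_or_lt with h0 | h0
  · simp [← h0]
  · exact mul_nonneg (by exact_mod_cast h0.le) (real_inner_comm x β ▸ hcon β h0)

theorem inner_comb_comb_nonpos {f g : R.simple → ℤ} (hf : 0 ≤ f) (hg : 0 ≤ g)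
    (hfg : ∀ β, f β = 0 ∨ g β = 0) : ⟪R.comb f, R.comb g⟫ ≤ 0 := by
  rw [inner_comb_left]
  refine Finset.sum_nonpos fun β _ => ?_
  rw [real_inner_comm, inner_comb_left, Finset.mul_sum]
  refine Finset.sum_nonpos fun β' _ => ?_
  rcases eq_or_ne β' β with rfl | hne
  · rcases hfg β' with h | h <;> simp [h]
  · exact mul_nonpos_of_nonneg_of_nonpos (by exact_mod_cast hf β)
      (mul_nonpos_of_nonneg_of_nonpos (by exact_mod_cast hg β') (R.inner_simple_nonpos hne))

theorem inner_pos_of_sub_eq_sub {x y β₁ β₂ : V} (hy : y ∈ R.roots) (hβ₁ : β₁ ∈ R.roots)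
    (hyβ₁ : ∀ c : ℝ, y ≠ c • β₁) (hsub : x - β₁ = y - β₂) (hxy : ⟪x, y⟫ ≤ 0)
    (h₁₂ : ⟪β₁, β₂⟫ ≤ 0) (hy₂ : ⟪y, β₂⟫ ≤ 0) : 0 < ⟪x, β₁⟫ := by
  have hx : x = y + β₁ - β₂ := by rw [sub_eq_iff_eq_add.mp hsub]; abel
  have hyy : 0 < ⟪y, y⟫ := real_inner_self_pos.mpr (R.ne_zero_of_mem_roots hy)
  have hββ : 0 < ⟪β₁, β₁⟫ := real_inner_self_pos.mpr (R.ne_zero_of_mem_roots hβ₁)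
  have hy₁ : ⟪y, β₁⟫ ≤ -⟪y, y⟫ := by
    rw [hx, inner_sub_left, inner_add_left, real_inner_comm y β₁, real_inner_comm y β₂] at hxy
    linarith
  rcases R.two_mul_abs_inner_eq hy hβ₁ hyβ₁ (by linarith) with h | h <;>
    rw [abs_of_neg (by linarith)] at h
  · linarith
  · rw [hx, inner_sub_left, inner_add_left, real_inner_comm β₁ β₂]
    linarith

variable (R) in
def layer (α : R.simple) (i : ℤ) : Set (R.simple → ℤ) := {f | R.comb f ∈ R.roots ∧ f α = i}

section Layer

variable {α : R.simple} {i : ℤ} {f g : R.simple → ℤ}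

theorem neg_mem_layer (hf : f ∈ R.layer α i) : -f ∈ R.layer α (-i) :=
  ⟨by rw [comb_neg, neg_mem_roots]; exact hf.1, by rw [Pi.neg_apply, hf.2]⟩

theorem ne_of_lt_of_mem_layer (hf : f ∈ R.layer α i) (hg : g ∈ R.layer α i) {β : R.simple}
    (h : g β < f β) : β ≠ α := by
  rintro rfl
  rw [hf.2, hg.2] at h
  exact h.false

theorem comb_ne_smul_simple (hi : i ≠ 0) (hf : f ∈ R.layer α i) {β : R.simple} (hβ : β ≠ α)
    (c : ℝ) : R.comb f ≠ c • (β : V) := by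
  rw [← comb_single β]
  exact comb_ne_smul_comb (hf.2 ▸ hi) (by simp [Ne.symm hβ]) c

theorem sub_single_mem_layer (hi : i ≠ 0) (hf : f ∈ R.layer α i) {β : R.simple} (hβ : β ≠ α)
    (h : 0 < ⟪R.comb f, β⟫) : f - Pi.single β 1 ∈ R.layer α i := by
  refine ⟨?_, by simp [Ne.symm hβ, hf.2]⟩
  rw [comb_sub, comb_single]
  exact R.sub_mem_roots hf.1 (R.simple_mem_roots β) (comb_ne_smul_simple hi hf hβ) h

theorem add_single_mem_layer (hi : i ≠ 0) (hf : f ∈ R.layer α i) {β : R.simple} (hβ : β ≠ α)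
    (h : ⟪R.comb f, β⟫ < 0) : f + Pi.single β 1 ∈ R.layer α i := by
  refine ⟨?_, by simp [Ne.symm hβ, hf.2]⟩
  rw [comb_add, comb_single]
  exact R.add_mem_roots hf.1 (R.simple_mem_roots β) (comb_ne_smul_simple hi hf hβ) h

theorem inner_nonpos_of_mem_layer (hi : i ≠ 0) (hf : f ∈ R.layer α i) (hg : g ∈ R.layer α i)
    {β₁ β₂ : R.simple} (h₁ : g β₁ < f β₁) (h₂ : f β₂ < g β₂) : ⟪R.comb f, R.comb g⟫ ≤ 0 := by
  by_contra! hpos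
  have hfg : ∀ c : ℝ, R.comb f ≠ c • R.comb g := fun c h =>
    h₁.ne' (congrFun (eq_of_comb_eq_smul_comb h (hf.2.trans hg.2.symm) (hg.2 ▸ hi)) β₁)
  have hmem := R.sub_mem_roots hf.1 hg.1 hfg hpos
  rw [← comb_sub] at hmem
  rcases R.nonneg_or_nonpos_of_comb_mem_roots hmem with h | h
  · exact (h β₂).not_gt (sub_neg.mpr h₂)
  · exact (h β₁).not_gt (sub_pos.mpr h₁)

theorem exists_inner_neg_of_forall_inner_nonpos (hex : ∃ β, g β < f β)
    (hsub : ∀ β, g β < f β → ⟪R.comb f, β⟫ ≤ 0) : ∃ β, g β < f β ∧ ⟪R.comb g, β⟫ < 0 := by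
  set u := f - f ⊓ g
  set w := g - f ⊓ g
  have hu : 0 ≤ u := fun β => sub_nonneg.mpr inf_le_left
  have hw : 0 ≤ w := fun β => sub_nonneg.mpr inf_le_right
  have huf : ⟪R.comb u, R.comb f⟫ ≤ 0 := by
    rw [inner_comb_left]
    refine Finset.sum_nonpos fun β _ => ?_
    rcases (hu β).eq_or_lt with h0 | h0
    · simp [← h0]
    · have hlt : g β < f β := by simpa [u] using h0
      exact mul_nonpos_of_nonneg_of_nonpos (by exact_mod_cast h0.le)
        (real_inner_comm (R.comb f) β ▸ hsub β hlt)
  have huw : ⟪R.comb u, R.comb w⟫ ≤ 0 :=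
    R.inner_comb_comb_nonpos hu hw fun β => by
      simp only [u, w, Pi.sub_apply, Pi.inf_apply]
      omega
  have huu : 0 < ⟪R.comb u, R.comb u⟫ := by
    refine real_inner_self_pos.mpr fun h0 => ?_
    obtain ⟨β, hβ⟩ := hex
    have := congrFun (comb_injective (h0.trans comb_zero.symm)) β
    simp only [u, Pi.sub_apply, Pi.inf_apply, Pi.zero_apply] at this
    omega
  have hug : ⟪R.comb u, R.comb g⟫ < 0 := by
    have : R.comb g = R.comb f - R.comb u + R.comb w := by
      rw [← comb_sub, ← comb_add, sub_sub_cancel, add_sub_cancel]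
    rw [this, inner_add_right, inner_sub_right]
    linarith
  obtain ⟨β, hβ, hβg⟩ := R.exists_pos_and_inner_neg hu hug
  exact ⟨β, by simpa [u] using hβ, hβg⟩

theorem inf_mem_layer_of_inner_pos (hi : i ≠ 0) (hf : f ∈ R.layer α i) (hg : g ∈ R.layer α i)
    (ih : ∀ f' ∈ R.layer α i, ∀ g' ∈ R.layer α i,
      sumNatAbs (f' - g') < sumNatAbs (f - g) → f' ⊓ g' ∈ R.layer α i)
    {β : R.simple} (hβ : g β < f β) (h : 0 < ⟪R.comb f, β⟫) : f ⊓ g ∈ R.layer α i := by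
  have hinf : (f - Pi.single β 1) ⊓ g = f ⊓ g := by
    ext δ
    rcases eq_or_ne δ β with rfl | hδ
    · simp only [Pi.inf_apply, Pi.sub_apply, Pi.single_eq_same]; omega
    · simp [hδ]
  rw [← hinf]
  refine ih _ (R.sub_single_mem_layer hi hf (R.ne_of_lt_of_mem_layer hf hg hβ) h) g hg ?_
  rw [sub_right_comm]
  exact sumNatAbs_sub_single_lt (sub_pos.mpr hβ)

theorem inf_mem_layer_of_inner_neg (hi : i ≠ 0) (hf : f ∈ R.layer α i) (hg : g ∈ R.layer α i)
    (ih : ∀ f' ∈ R.layer α i, ∀ g' ∈ R.layer α i,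
      sumNatAbs (f' - g') < sumNatAbs (f - g) → f' ⊓ g' ∈ R.layer α i)
    {β : R.simple} (hβ : g β < f β) (h : ⟪R.comb g, β⟫ < 0) (h2 : 2 ≤ sumNatAbs (f - f ⊓ g)) :
    f ⊓ g ∈ R.layer α i := by
  have hup : f ⊓ (g + Pi.single β 1) = f ⊓ g + Pi.single β 1 := by
    ext δ
    rcases eq_or_ne δ β with rfl | hδ
    · simp only [Pi.inf_apply, Pi.add_apply, Pi.single_eq_same]; omega
    · simp [hδ]
  have hdown : (f ⊓ g + Pi.single β 1) ⊓ g = f ⊓ g := by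
    ext δ
    rcases eq_or_ne δ β with rfl | hδ
    · simp only [Pi.inf_apply, Pi.add_apply, Pi.single_eq_same]; omega
    · simp [hδ]
  have hmid : f ⊓ g + Pi.single β 1 ∈ R.layer α i := by
    rw [← hup]
    refine ih f hf _ (R.add_single_mem_layer hi hg (R.ne_of_lt_of_mem_layer hf hg hβ) h) ?_
    rw [← sub_sub]
    exact sumNatAbs_sub_single_lt (sub_pos.mpr hβ)
  rw [← hdown]
  refine ih _ hmid g hg ?_
  calc sumNatAbs (f ⊓ g + Pi.single β 1 - g)
      ≤ sumNatAbs (f ⊓ g - g) + sumNatAbs (Pi.single β (1 : ℤ)) := by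
        rw [add_sub_right_comm]
        exact sumNatAbs_add_le _ _
    _ = sumNatAbs (g - f ⊓ g) + 1 := by rw [← sumNatAbs_neg, neg_sub, sumNatAbs_single]
    _ < sumNatAbs (f - g) := by rw [sumNatAbs_sub_eq_add_inf f g]; omega

theorem false_of_sumNatAbs_lt_two (hi : i ≠ 0) (hf : f ∈ R.layer α i) (hg : g ∈ R.layer α i)
    (hfg : ¬f ≤ g) (hgf : ¬g ≤ f) (h2f : sumNatAbs (f - f ⊓ g) < 2)
    (h2g : sumNatAbs (g - f ⊓ g) < 2) (hsubf : ∀ β, g β < f β → ⟪R.comb f, β⟫ ≤ 0)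
    (hsubg : ∀ β, f β < g β → ⟪R.comb g, β⟫ ≤ 0) : False := by
  obtain ⟨β₁, h₁⟩ := exists_eq_single_of_sumNatAbs_lt_two (h := f - f ⊓ g)
    (fun β => sub_nonneg.mpr inf_le_left) (sub_ne_zero.mpr fun h => hfg (inf_eq_left.mp h.symm))
    h2f
  obtain ⟨β₂, h₂⟩ := exists_eq_single_of_sumNatAbs_lt_two (h := g - f ⊓ g)
    (fun β => sub_nonneg.mpr inf_le_right) (sub_ne_zero.mpr fun h => hgf (inf_eq_right.mp h.symm))
    h2g
  have hlt₁ : g β₁ < f β₁ := by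
    have := congrFun h₁ β₁
    simp only [Pi.sub_apply, Pi.inf_apply, Pi.single_eq_same] at this
    omega
  have hlt₂ : f β₂ < g β₂ := by
    have := congrFun h₂ β₂
    simp only [Pi.sub_apply, Pi.inf_apply, Pi.single_eq_same] at this
    omega
  have hne : β₁ ≠ β₂ := by
    rintro rfl
    omega
  have hsub : R.comb f - β₁ = R.comb g - β₂ := by
    rw [← comb_single, ← comb_single, ← comb_sub, ← comb_sub, ← h₁, ← h₂, sub_sub_cancel,
      sub_sub_cancel]
  exact (hsubf β₁ hlt₁).not_gt (R.inner_pos_of_sub_eq_sub hg.1 (R.simple_mem_roots β₁)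
    (comb_ne_smul_simple hi hg (R.ne_of_lt_of_mem_layer hf hg hlt₁)) hsub
    (R.inner_nonpos_of_mem_layer hi hf hg hlt₁ hlt₂) (R.inner_simple_nonpos hne)
    (hsubg β₂ hlt₂))

theorem inf_mem_layer (hi : i ≠ 0) (hf : f ∈ R.layer α i) (hg : g ∈ R.layer α i) :
    f ⊓ g ∈ R.layer α i := by
  induction hn : sumNatAbs (f - g) using Nat.strong_induction_on generalizing f g with
  | _ n ih =>
  subst hn
  replace ih : ∀ f' ∈ R.layer α i, ∀ g' ∈ R.layer α i,
      sumNatAbs (f' - g') < sumNatAbs (f - g) → f' ⊓ g' ∈ R.layer α i :=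
    fun f' hf' g' hg' h => ih _ h hf' hg' rfl
  have ih' : ∀ f' ∈ R.layer α i, ∀ g' ∈ R.layer α i,
      sumNatAbs (f' - g') < sumNatAbs (g - f) → f' ⊓ g' ∈ R.layer α i := by
    rwa [← sumNatAbs_neg, neg_sub]
  by_cases hfg : f ≤ g
  · rwa [inf_eq_left.mpr hfg]
  by_cases hgf : g ≤ f
  · rwa [inf_eq_right.mpr hgf]
  by_cases hsubf : ∃ β, g β < f β ∧ 0 < ⟪R.comb f, β⟫
  · obtain ⟨β, hβ, h⟩ := hsubf
    exact R.inf_mem_layer_of_inner_pos hi hf hg ih hβ h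
  by_cases hsubg : ∃ β, f β < g β ∧ 0 < ⟪R.comb g, β⟫
  · obtain ⟨β, hβ, h⟩ := hsubg
    rw [inf_comm]
    exact R.inf_mem_layer_of_inner_pos hi hg hf ih' hβ h
  push Not at hsubf hsubg
  by_cases h2f : 2 ≤ sumNatAbs (f - f ⊓ g)
  · obtain ⟨β, hβ, h⟩ := R.exists_inner_neg_of_forall_inner_nonpos
      (by simpa [Pi.le_def] using hfg) hsubf
    exact R.inf_mem_layer_of_inner_neg hi hf hg ih hβ h h2f
  by_cases h2g : 2 ≤ sumNatAbs (g - f ⊓ g)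
  · obtain ⟨β, hβ, h⟩ := R.exists_inner_neg_of_forall_inner_nonpos
      (by simpa [Pi.le_def] using hgf) hsubg
    rw [inf_comm] at h2g ⊢
    exact R.inf_mem_layer_of_inner_neg hi hg hf ih' hβ h h2g
  exact (R.false_of_sumNatAbs_lt_two hi hf hg hfg hgf (by omega) (by omega) hsubf hsubg).elim

theorem sup_mem_layer (hi : i ≠ 0) (hf : f ∈ R.layer α i) (hg : g ∈ R.layer α i) :
    f ⊔ g ∈ R.layer α i := by
  have := R.neg_mem_layer (R.inf_mem_layer (neg_ne_zero.mpr hi) (R.neg_mem_layer hf)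
    (R.neg_mem_layer hg))
  rwa [neg_inf, neg_neg, neg_neg, neg_neg] at this

end Layer

section Positive

variable {α : R.simple} {i : ℕ} {f g : R.simple → ℤ}

theorem coeffs_mem_layer {γ : V} (h : γ ∈ R.pos ∧ R.coeff γ α = i) :
    R.coeffs γ ∈ R.layer α i :=
  ⟨by rw [comb_coeffs h.1]; exact Or.inl h.1, by simp [coeffs, h.2]⟩

theorem comb_mem_pos_of_mem_layer (hi : 1 ≤ i) (hf : f ∈ R.layer α i) :
    R.comb f ∈ R.pos ∧ R.coeff (R.comb f) α = i := by
  have hpos : R.comb f ∈ R.pos := by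
    refine hf.1.resolve_right fun h => ?_
    rw [← comb_neg] at h
    have := nonneg_of_comb_mem_pos h α
    simp only [Pi.zero_apply, Pi.neg_apply, hf.2, Left.nonneg_neg_iff] at this
    omega
  refine ⟨hpos, ?_⟩
  have := congrFun (coeffs_comb hpos) α
  simp only [coeffs, hf.2] at this
  exact_mod_cast this

theorem rle_of_le {μ ν : V} (hμ : R.comb f = μ) (hν : R.comb g = ν) (h : f ≤ g) :
    R.rle μ ν := by
  refine ⟨fun β => if hβ : β ∈ R.simple then (g ⟨β, hβ⟩ - f ⟨β, hβ⟩).toNat else 0, ?_⟩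
  rw [← hμ, ← hν, ← comb_sub, comb]
  conv_rhs => rw [← Finset.sum_coe_sort]
  refine Finset.sum_congr rfl fun β _ => ?_
  simp only [Pi.sub_apply, β.2, dite_true, Subtype.coe_eta]
  rw [← Int.cast_natCast, Int.toNat_of_nonneg (sub_nonneg.mpr (h β))]

theorem comb_coeffs_inf (γ₁ γ₂ : V) : R.comb (R.coeffs γ₁ ⊓ R.coeffs γ₂) =
    ∑ β ∈ R.simple, ((min (R.coeff γ₁ β) (R.coeff γ₂ β) : ℕ) : ℝ) • β := by
  conv_rhs => rw [← Finset.sum_coe_sort]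
  simp [comb, coeffs]

theorem comb_coeffs_sup (γ₁ γ₂ : V) : R.comb (R.coeffs γ₁ ⊔ R.coeffs γ₂) =
    ∑ β ∈ R.simple, ((max (R.coeff γ₁ β) (R.coeff γ₂ β) : ℕ) : ℝ) • β := by
  conv_rhs => rw [← Finset.sum_coe_sort]
  simp [comb, coeffs]

end Positive

theorem exists_least_of_mem_layer {α : V} (hα : α ∈ R.simple) {i : ℕ} (hi : 1 ≤ i)
    (hne : ∃ γ ∈ R.pos, R.coeff γ α = i) :
    ∃ m, (m ∈ R.pos ∧ R.coeff m α = i) ∧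
      ∀ γ, (γ ∈ R.pos ∧ R.coeff γ α = i) → R.rle m γ := by
  set S := R.pos.filter (fun γ => R.coeff γ α = i)
  have hS : S.Nonempty := let ⟨γ, hγ, hγα⟩ := hne; ⟨γ, Finset.mem_filter.mpr ⟨hγ, hγα⟩⟩
  have hmem : S.inf' hS R.coeffs ∈ R.layer ⟨α, hα⟩ i :=
    Finset.inf'_induction hS _ (fun f hf g hg => R.inf_mem_layer (by omega) hf hg)
      fun γ hγ => R.coeffs_mem_layer (Finset.mem_filter.mp hγ)
  exact ⟨_, R.comb_mem_pos_of_mem_layer hi hmem, fun γ hγ =>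
    R.rle_of_le rfl (comb_coeffs hγ.1) (Finset.inf'_le _ (Finset.mem_filter.mpr hγ))⟩

theorem exists_greatest_of_mem_layer {α : V} (hα : α ∈ R.simple) {i : ℕ} (hi : 1 ≤ i)
    (hne : ∃ γ ∈ R.pos, R.coeff γ α = i) :
    ∃ M, (M ∈ R.pos ∧ R.coeff M α = i) ∧
      ∀ γ, (γ ∈ R.pos ∧ R.coeff γ α = i) → R.rle γ M := by
  set S := R.pos.filter (fun γ => R.coeff γ α = i)
  have hS : S.Nonempty := let ⟨γ, hγ, hγα⟩ := hne; ⟨γ, Finset.mem_filter.mpr ⟨hγ, hγα⟩⟩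
  have hmem : S.sup' hS R.coeffs ∈ R.layer ⟨α, hα⟩ i :=
    Finset.sup'_induction hS _ (fun f hf g hg => R.sup_mem_layer (by omega) hf hg)
      fun γ hγ => R.coeffs_mem_layer (Finset.mem_filter.mp hγ)
  exact ⟨_, R.comb_mem_pos_of_mem_layer hi hmem, fun γ hγ =>
    R.rle_of_le (comb_coeffs hγ.1) rfl (Finset.le_sup' _ (Finset.mem_filter.mpr hγ))⟩

end SimpleRS

/-- for a simple root `α` and `i ≥ 1`, if `Δ_α(i) = {γ ∈ Δ⁺ : ht_α(γ) = i}`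
is nonempty then it is a modular lattice under the root order: it has a unique minimal
(= least) and a unique maximal (= greatest) element, and for `γ₁, γ₂ ∈ Δ_α(i)` the
coefficientwise min and max are roots in `Δ_α(i)` giving the meet and the join. -/
theorem stmt6 {V : Type*} [NormedAddCommGroup V] [InnerProductSpace ℝ V]
    (R : SimpleRS V) {α : V} (hα : α ∈ R.simple) {i : ℕ} (hi : 1 ≤ i)
    (hne : ∃ γ ∈ R.pos, R.coeff γ α = i) :
    (∃ m, (m ∈ R.pos ∧ R.coeff m α = i) ∧
        ∀ γ, (γ ∈ R.pos ∧ R.coeff γ α = i) → R.rle m γ) ∧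
    (∃ M, (M ∈ R.pos ∧ R.coeff M α = i) ∧
        ∀ γ, (γ ∈ R.pos ∧ R.coeff γ α = i) → R.rle γ M) ∧
    (∀ γ₁ γ₂, (γ₁ ∈ R.pos ∧ R.coeff γ₁ α = i) → (γ₂ ∈ R.pos ∧ R.coeff γ₂ α = i) →
      ((∑ β ∈ R.simple, ((min (R.coeff γ₁ β) (R.coeff γ₂ β) : ℕ) : ℝ) • β) ∈ R.pos ∧
       R.coeff (∑ β ∈ R.simple, ((min (R.coeff γ₁ β) (R.coeff γ₂ β) : ℕ) : ℝ) • β) α = i ∧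
       R.rle (∑ β ∈ R.simple, ((min (R.coeff γ₁ β) (R.coeff γ₂ β) : ℕ) : ℝ) • β) γ₁ ∧
       R.rle (∑ β ∈ R.simple, ((min (R.coeff γ₁ β) (R.coeff γ₂ β) : ℕ) : ℝ) • β) γ₂ ∧
       (∑ β ∈ R.simple, ((max (R.coeff γ₁ β) (R.coeff γ₂ β) : ℕ) : ℝ) • β) ∈ R.pos ∧
       R.coeff (∑ β ∈ R.simple, ((max (R.coeff γ₁ β) (R.coeff γ₂ β) : ℕ) : ℝ) • β) α = i ∧
       R.rle γ₁ (∑ β ∈ R.simple, ((max (R.coeff γ₁ β) (R.coeff γ₂ β) : ℕ) : ℝ) • β) ∧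
       R.rle γ₂ (∑ β ∈ R.simple, ((max (R.coeff γ₁ β) (R.coeff γ₂ β) : ℕ) : ℝ) • β))) := by
  refine ⟨R.exists_least_of_mem_layer hα hi hne, R.exists_greatest_of_mem_layer hα hi hne,
    fun γ₁ γ₂ h₁ h₂ => ?_⟩
  have hi0 : (i : ℤ) ≠ 0 := by omega
  have hf₁ := R.coeffs_mem_layer (α := ⟨α, hα⟩) h₁
  have hf₂ := R.coeffs_mem_layer (α := ⟨α, hα⟩) h₂
  obtain ⟨hinf, hinfα⟩ := R.comb_mem_pos_of_mem_layer hi (R.inf_mem_layer hi0 hf₁ hf₂)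
  obtain ⟨hsup, hsupα⟩ := R.comb_mem_pos_of_mem_layer hi (R.sup_mem_layer hi0 hf₁ hf₂)
  rw [← R.comb_coeffs_inf, ← R.comb_coeffs_sup]
  exact ⟨hinf, hinfα, R.rle_of_le rfl (R.comb_coeffs h₁.1) inf_le_left,
    R.rle_of_le rfl (R.comb_coeffs h₂.1) inf_le_right, hsup, hsupα,
    R.rle_of_le (R.comb_coeffs h₁.1) rfl le_sup_left,
    R.rle_of_le (R.comb_coeffs h₂.1) rfl le_sup_right⟩
end

section
/- Call a positive root γ commutative if the upper ideal I⟨≽γ⟩ = {ν ∈ Δ⁺ : ν ≽ γ} is abelian, i.e., no two elements of it sum to a root. Let Δ be not of type A_n. If γ is non-commutative, then γ ≼ ⌊θ/2⌋ (coefficientwise: ht_α(γ) ≤ ⌊ht_α(θ)/2⌋ for every simple root α). -/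
open scoped RealInnerProductSpace

/-!
If `ν₁, ν₂ ≽ γ` and `ν₁ + ν₂` is a root, it is a positive root, since its coefficients are
nonnegative. Hence `2γ ≼ ν₁ + ν₂ ≼ θ`, and comparing coefficients in the basis of simple roots
gives `2 ht_α(γ) ≤ ht_α(θ)`.
-/

namespace SimpleRS

variable {V : Type*} [NormedAddCommGroup V] [InnerProductSpace ℝ V] (R : SimpleRS V)

theorem eq_of_sum_smul_simple_eq {f g : V → ℝ}
    (h : ∑ α ∈ R.simple, f α • α = ∑ α ∈ R.simple, g α • α) : ∀ α ∈ R.simple, f α = g α :=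
  (linearIndepOn_finset_iffₛ (v := id) (s := R.simple)).mp R.indep f g h

theorem le_of_rle_sum_smul {a b : V → ℕ}
    (h : R.rle (∑ α ∈ R.simple, (a α : ℝ) • α) (∑ α ∈ R.simple, (b α : ℝ) • α)) :
    ∀ α ∈ R.simple, a α ≤ b α := by
  obtain ⟨c, hc⟩ := h
  have hb : ∀ α ∈ R.simple, (b α : ℝ) = ((a α + c α : ℕ) : ℝ) := by
    refine R.eq_of_sum_smul_simple_eq ?_
    simp only [Nat.cast_add, add_smul, Finset.sum_add_distrib, ← hc, add_sub_cancel]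
  intro α hα
  have := hb α hα
  norm_cast at this
  omega

theorem sum_smul_coeff_add {μ μ' : V} (hμ : μ ∈ R.pos) (hμ' : μ' ∈ R.pos) :
    μ + μ' = ∑ α ∈ R.simple, ((R.coeff μ α + R.coeff μ' α : ℕ) : ℝ) • α := by
  simp only [Nat.cast_add, add_smul, Finset.sum_add_distrib, ← R.coeff_spec μ hμ,
    ← R.coeff_spec μ' hμ']

theorem coeff_add_coeff_le_of_rle {μ μ' ν : V} (hμ : μ ∈ R.pos) (hμ' : μ' ∈ R.pos)
    (hν : ν ∈ R.pos) (h : R.rle (μ + μ') ν) :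
    ∀ α ∈ R.simple, R.coeff μ α + R.coeff μ' α ≤ R.coeff ν α := by
  rw [R.sum_smul_coeff_add hμ hμ', R.coeff_spec ν hν] at h
  exact R.le_of_rle_sum_smul h

variable {R}

theorem rle.trans {μ κ ν : V} (h₁ : R.rle μ κ) (h₂ : R.rle κ ν) : R.rle μ ν := by
  obtain ⟨c₁, hc₁⟩ := h₁
  obtain ⟨c₂, hc₂⟩ := h₂
  refine ⟨c₁ + c₂, ?_⟩
  simp only [Pi.add_apply, Nat.cast_add, add_smul, Finset.sum_add_distrib, ← hc₁, ← hc₂]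
  abel

theorem rle.add {μ₁ μ₂ ν₁ ν₂ : V} (h₁ : R.rle μ₁ ν₁) (h₂ : R.rle μ₂ ν₂) :
    R.rle (μ₁ + μ₂) (ν₁ + ν₂) := by
  obtain ⟨c₁, hc₁⟩ := h₁
  obtain ⟨c₂, hc₂⟩ := h₂
  refine ⟨c₁ + c₂, ?_⟩
  simp only [Pi.add_apply, Nat.cast_add, add_smul, Finset.sum_add_distrib, ← hc₁, ← hc₂]
  abel

theorem zero_rle_of_mem_pos {ν : V} (hν : ν ∈ R.pos) : R.rle 0 ν :=
  ⟨R.coeff ν, by rw [sub_zero, ← R.coeff_spec ν hν]⟩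

theorem neg_notMem_pos_of_zero_rle {x : V} (hx : R.rle 0 x) : -x ∉ R.pos := by
  intro hneg
  obtain ⟨c, hc⟩ := hx
  have hle : R.rle (∑ α ∈ R.simple, (R.coeff (-x) α : ℝ) • α)
      (∑ α ∈ R.simple, ((0 : ℕ) : ℝ) • α) :=
    ⟨c, by rw [← R.coeff_spec _ hneg, ← hc]; simp⟩
  apply R.root_ne _ hneg
  rw [R.coeff_spec _ hneg]
  refine Finset.sum_eq_zero fun α hα => ?_
  rw [Nat.le_zero.mp (R.le_of_rle_sum_smul hle α hα), Nat.cast_zero, zero_smul]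

theorem exists_add_mem_pos_of_not_isCom {γ : V} (h : ¬ R.IsCom γ) :
    ∃ ν₁ ν₂, R.rle γ ν₁ ∧ R.rle γ ν₂ ∧ ν₁ + ν₂ ∈ R.pos := by
  simp only [IsCom, not_forall, not_and_or, not_not] at h
  obtain ⟨ν₁, hν₁, ν₂, hν₂, h₁, h₂, hsum | hneg⟩ := h
  · exact ⟨ν₁, ν₂, h₁, h₂, hsum⟩
  · have hzero : R.rle 0 (ν₁ + ν₂) := by
      simpa using (zero_rle_of_mem_pos hν₁).add (zero_rle_of_mem_pos hν₂)
    exact absurd hneg (neg_notMem_pos_of_zero_rle hzero)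

end SimpleRS

theorem stmt10_general {V : Type*} [NormedAddCommGroup V] [InnerProductSpace ℝ V]
    (R : SimpleRS V) {γ : V} (hγ : γ ∈ R.pos)
    (hnc : ¬ R.IsCom γ) :
    ∀ α ∈ R.simple, R.coeff γ α ≤ R.coeff R.highest α / 2 := by
  obtain ⟨ν₁, ν₂, h₁, h₂, hsum⟩ := SimpleRS.exists_add_mem_pos_of_not_isCom hnc
  have h2γ : R.rle (γ + γ) R.highest := (h₁.add h₂).trans (R.highest_spec _ hsum)
  intro α hα
  have := R.coeff_add_coeff_le_of_rle hγ hγ R.highest_mem h2γ α hα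
  omega

/-- if `Δ` is not of type `A_n` and `γ` is a non-commutative
positive root, then `γ ≼ ⌊θ/2⌋`, i.e. `ht_α(γ) ≤ ⌊ht_α(θ)/2⌋` for every simple
root `α`. -/
theorem stmt10 {V : Type*} [NormedAddCommGroup V] [InnerProductSpace ℝ V]
    (R : SimpleRS V) (hA : ¬ R.IsTypeA) {γ : V} (hγ : γ ∈ R.pos)
    (hnc : ¬ R.IsCom γ) :
    ∀ α ∈ R.simple, R.coeff γ α ≤ R.coeff R.highest α / 2 :=
  stmt10_general R hγ hnc
end

section
/- If Δ is of type A_n, then every positive root is commutative, i.e., for every γ ∈ Δ⁺ the upper ideal {ν ∈ Δ⁺ : ν ≽ γ} contains no two elements (not necessarily distinct) whose sum is a root. -/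
/-!
The partial-sum functional `L_a v = ∑_{m ≤ a} v m` takes the value `0` or `1` on every positive
root and is nonnegative on the simple roots, hence monotone for the root order. For
`γ = ε_a − ε_b` we get `L_a γ = 1`, so `L_a (ν₁ + ν₂) ≥ 2` whenever `ν₁, ν₂ ≽ γ`; but `|L_a|` is
at most `1` on every root.
-/

open scoped RealInnerProductSpace

/-- the standard basis vector `ε i` of `ℝ^{n+1}` -/
noncomputable def eps {n : ℕ} (i : Fin (n + 1)) : EuclideanSpace ℝ (Fin (n + 1)) :=
  EuclideanSpace.single i (1 : ℝ)

/-- the positive roots of type `A_n`: `ε_i − ε_j` for `i < j` -/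
def Apos (n : ℕ) : Set (EuclideanSpace ℝ (Fin (n + 1))) :=
  {v | ∃ i j : Fin (n + 1), i < j ∧ v = eps i - eps j}

/-- the root order of type `A_n`: `μ ≼ ν` iff `ν − μ` is a nonnegative integral
combination of the simple roots `α_i = ε_i − ε_{i+1}` -/
def Arle (n : ℕ) (μ ν : EuclideanSpace ℝ (Fin (n + 1))) : Prop :=
  ∃ c : Fin n → ℕ, ν - μ = ∑ i : Fin n, (c i : ℝ) • (eps i.castSucc - eps i.succ)

noncomputable def partialSum (n : ℕ) (k : Fin (n + 1)) :
    EuclideanSpace ℝ (Fin (n + 1)) →L[ℝ] ℝ :=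
  ∑ m ∈ Finset.Iic k, EuclideanSpace.proj m

lemma partialSum_eps {n : ℕ} (k p : Fin (n + 1)) :
    partialSum n k (eps p) = if p ≤ k then 1 else 0 := by
  simp [partialSum, eps, PiLp.single_apply]

lemma partialSum_mem_Icc_of_mem_Apos {n : ℕ} (k : Fin (n + 1))
    {v : EuclideanSpace ℝ (Fin (n + 1))} (hv : v ∈ Apos n) : partialSum n k v ∈ Set.Icc 0 1 := by
  obtain ⟨i, j, hij, rfl⟩ := hv
  rw [map_sub, partialSum_eps, partialSum_eps]
  by_cases hj : j ≤ k
  · simp [hj, hij.le.trans hj]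
  · split_ifs <;> norm_num

lemma partialSum_eps_sub_eps_self {n : ℕ} {a b : Fin (n + 1)} (hab : a < b) :
    partialSum n a (eps a - eps b) = 1 := by
  simp [partialSum_eps, not_le.mpr hab]

lemma partialSum_mono_of_Arle {n : ℕ} (k : Fin (n + 1))
    {μ ν : EuclideanSpace ℝ (Fin (n + 1))} (h : Arle n μ ν) :
    partialSum n k μ ≤ partialSum n k ν := by
  obtain ⟨c, hc⟩ := h
  have hsimple (i : Fin n) : 0 ≤ partialSum n k (eps i.castSucc - eps i.succ) :=
    (partialSum_mem_Icc_of_mem_Apos k ⟨_, _, Fin.castSucc_lt_succ, rfl⟩).1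
  have hdiff : 0 ≤ partialSum n k (ν - μ) := by
    rw [hc, map_sum]
    exact Finset.sum_nonneg fun i _ => by
      rw [map_smul, smul_eq_mul]
      exact mul_nonneg (Nat.cast_nonneg _) (hsimple i)
  rw [map_sub] at hdiff
  linarith

theorem stmt12_general (n : ℕ) (γ : EuclideanSpace ℝ (Fin (n + 1))) (hγ : γ ∈ Apos n)
    (ν₁ ν₂ : EuclideanSpace ℝ (Fin (n + 1)))
    (hg1 : Arle n γ ν₁) (hg2 : Arle n γ ν₂) :
    ν₁ + ν₂ ∉ Apos n ∧ -(ν₁ + ν₂) ∉ Apos n := by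
  obtain ⟨a, b, hab, rfl⟩ := hγ
  have hγ_eq := partialSum_eps_sub_eps_self hab
  have hν₁ := partialSum_mono_of_Arle a hg1
  have hν₂ := partialSum_mono_of_Arle a hg2
  constructor
  · intro hroot
    have hle_one := (partialSum_mem_Icc_of_mem_Apos a hroot).2
    rw [map_add] at hle_one
    linarith
  · intro hroot
    have hnonneg := (partialSum_mem_Icc_of_mem_Apos a hroot).1
    rw [map_neg, map_add] at hnonneg
    linarith

/-- in type `A_n`, every positive root `γ` is commutative: no two
elements of the upper ideal `{ν ∈ Δ⁺ : ν ≽ γ}` (not necessarily distinct) sum to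
a root. -/
theorem stmt12 (n : ℕ) (γ : EuclideanSpace ℝ (Fin (n + 1))) (hγ : γ ∈ Apos n)
    (ν₁ ν₂ : EuclideanSpace ℝ (Fin (n + 1)))
    (h1 : ν₁ ∈ Apos n) (h2 : ν₂ ∈ Apos n)
    (hg1 : Arle n γ ν₁) (hg2 : Arle n γ ν₂) :
    ν₁ + ν₂ ∉ Apos n ∧ -(ν₁ + ν₂) ∉ Apos n :=
  stmt12_general n γ hγ ν₁ ν₂ hg1 hg2
end

section
/- Let Δ be a simple root system with highest root θ, H = {γ ∈ Δ⁺ : (γ,θ) > 0}. For each η ∈ H \ {θ}, the element θ − η is again a root, it lies in H \ {θ}, and it is the unique root ν ∈ H \ {θ} such that η + ν is a root. -/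
open scoped RealInnerProductSpace

/-!
The highest root is dominant, so `⟪γ, θ⟫ ≥ 0` for every positive root `γ`, and a positive root
with `⟪γ, θ⟫ = ⟪θ, θ⟫` equals `θ`: the root `s_θ γ = γ - 2θ` pairs negatively with `θ`, so it is
negative, and `2θ - γ ≼ θ` gives `θ ≼ γ`. Hence the Cartan integer `2⟪γ, θ⟫ / ⟪θ, θ⟫` of
`γ ∈ H \ {θ}` lies strictly between `0` and `2`, so it is `1`: then `s_θ γ = γ - θ` is a negative
root, and `θ - γ ∈ H \ {θ}`. If `η + ν` is a root for `η, ν ∈ H \ {θ}`, then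
`⟪η + ν, θ⟫ = ⟪θ, θ⟫`, which forces `η + ν = θ`.
-/

namespace SimpleRS

variable {V : Type*} [NormedAddCommGroup V] [InnerProductSpace ℝ V] (R : SimpleRS V)

lemma eq_zero_of_sum_smul_eq_zero {f : V → ℝ} (h : ∑ α ∈ R.simple, f α • α = 0) :
    ∀ α ∈ R.simple, f α = 0 :=
  linearIndepOn_iff'.mp (show LinearIndepOn ℝ id (R.simple : Set V) from R.indep) R.simple f
    subset_rfl h

lemma eq_coeff_of_smul_eq_sum {z : ℝ} {α : V} (hα : α ∈ R.simple) {c : V → ℕ}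
    (h : z • α = ∑ β ∈ R.simple, (c β : ℝ) • β) : z = c α := by
  classical
  have hsum : ∑ β ∈ R.simple, ((c β : ℝ) - if β = α then z else 0) • β = 0 := by
    simp only [sub_smul, ite_smul, zero_smul, Finset.sum_sub_distrib, Finset.sum_ite_eq',
      if_pos hα, ← h, sub_self]
  simpa [sub_eq_zero, eq_comm] using R.eq_zero_of_sum_smul_eq_zero hsum α hα

def IsNatComb (v : V) : Prop := ∃ c : V → ℕ, v = ∑ α ∈ R.simple, (c α : ℝ) • α

variable {R}

lemma isNatComb_of_mem_pos {γ : V} (hγ : γ ∈ R.pos) : R.IsNatComb γ :=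
  ⟨R.coeff γ, R.coeff_spec γ hγ⟩

lemma isNatComb_highest_sub {γ : V} (hγ : γ ∈ R.pos) : R.IsNatComb (R.highest - γ) :=
  R.highest_spec γ hγ

lemma IsNatComb.add {v w : V} (hv : R.IsNatComb v) (hw : R.IsNatComb w) :
    R.IsNatComb (v + w) := by
  obtain ⟨a, rfl⟩ := hv
  obtain ⟨b, rfl⟩ := hw
  exact ⟨a + b, by simp only [Pi.add_apply, Nat.cast_add, add_smul, Finset.sum_add_distrib]⟩

lemma IsNatComb.eq_zero_of_neg {v : V} (hv : R.IsNatComb v) (hnv : R.IsNatComb (-v)) :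
    v = 0 := by
  obtain ⟨a, rfl⟩ := hv
  obtain ⟨b, hb⟩ := hnv
  have hsum : ∑ α ∈ R.simple, ((a α : ℝ) + b α) • α = 0 := by
    simp only [add_smul, Finset.sum_add_distrib, ← hb, add_neg_cancel]
  refine Finset.sum_eq_zero fun α hα => ?_
  have hab := R.eq_zero_of_sum_smul_eq_zero hsum α hα
  have ha : (a α : ℝ) = 0 := by
    linarith [Nat.cast_nonneg (α := ℝ) (a α), Nat.cast_nonneg (α := ℝ) (b α)]
  simp [ha]

lemma IsNatComb.nonneg_of_smul_simple {z : ℝ} {α : V} (hα : α ∈ R.simple)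
    (h : R.IsNatComb (z • α)) : 0 ≤ z := by
  obtain ⟨c, hc⟩ := h
  exact R.eq_coeff_of_smul_eq_sum hα hc ▸ Nat.cast_nonneg _

lemma inner_highest_simple_nonneg {α : V} (hα : α ∈ R.simple) : 0 ≤ ⟪R.highest, α⟫ := by
  have hαα : 0 < ⟪α, α⟫ := real_inner_self_pos.mpr (R.root_ne α (R.simple_sub hα))
  have hz : R.IsNatComb ((2 * ⟪R.highest, α⟫ / ⟪α, α⟫) • α) := by
    rcases R.reflect_mem α (R.simple_sub hα) _ R.highest_mem with h | h
    · simpa using isNatComb_highest_sub h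
    · simpa using (isNatComb_of_mem_pos h).add (isNatComb_of_mem_pos R.highest_mem)
  have := mul_nonneg (hz.nonneg_of_smul_simple hα) hαα.le
  rw [div_mul_cancel₀ _ hαα.ne'] at this
  linarith

lemma IsNatComb.inner_highest_nonneg {v : V} (hv : R.IsNatComb v) : 0 ≤ ⟪v, R.highest⟫ := by
  obtain ⟨c, rfl⟩ := hv
  rw [sum_inner]
  refine Finset.sum_nonneg fun α hα => ?_
  rw [real_inner_smul_left, real_inner_comm]
  exact mul_nonneg (Nat.cast_nonneg _) (inner_highest_simple_nonneg hα)

lemma inner_highest_nonneg {γ : V} (hγ : γ ∈ R.pos) : 0 ≤ ⟪γ, R.highest⟫ :=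
  (isNatComb_of_mem_pos hγ).inner_highest_nonneg

lemma inner_highest_le {γ : V} (hγ : γ ∈ R.pos) : ⟪γ, R.highest⟫ ≤ ⟪R.highest, R.highest⟫ := by
  have := (isNatComb_highest_sub hγ).inner_highest_nonneg
  rw [inner_sub_left] at this
  linarith

variable (R) in
lemma inner_highest_self_pos : 0 < ⟪R.highest, R.highest⟫ :=
  real_inner_self_pos.mpr (R.root_ne _ R.highest_mem)

lemma eq_highest_of_inner_eq {γ : V} (hγ : γ ∈ R.pos)
    (h : ⟪γ, R.highest⟫ = ⟪R.highest, R.highest⟫) : γ = R.highest := by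
  have hθ := R.inner_highest_self_pos
  have hpairing : 2 * ⟪γ, R.highest⟫ / ⟪R.highest, R.highest⟫ = 2 := by
    rw [h, mul_div_assoc, div_self hθ.ne', mul_one]
  rcases R.reflect_mem _ R.highest_mem γ hγ with h' | h' <;> rw [hpairing] at h'
  · have := inner_highest_nonneg h'
    rw [inner_sub_left, real_inner_smul_left] at this
    linarith
  · have hle : R.IsNatComb (-(R.highest - γ)) := by
      convert isNatComb_highest_sub h' using 1
      module
    exact (sub_eq_zero.mp ((isNatComb_highest_sub hγ).eq_zero_of_neg hle)).symm

lemma pairing_highest_eq_one {γ : V} (hγ : γ ∈ R.pos) (hpos : 0 < ⟪γ, R.highest⟫)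
    (hne : γ ≠ R.highest) : 2 * ⟪γ, R.highest⟫ / ⟪R.highest, R.highest⟫ = 1 := by
  obtain ⟨z, hz⟩ := R.crystallographic _ R.highest_mem γ hγ
  have hθ := R.inner_highest_self_pos
  have hlt : ⟪γ, R.highest⟫ < ⟪R.highest, R.highest⟫ :=
    (inner_highest_le hγ).lt_of_ne fun h => hne (eq_highest_of_inner_eq hγ h)
  have hz0 : (0 : ℝ) < z := hz ▸ by positivity
  have hz2 : (z : ℝ) < 2 := hz ▸ (div_lt_iff₀ hθ).mpr (by linarith)
  have hz1 : z = 1 := by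
    have : 0 < z := by exact_mod_cast hz0
    have : z < 2 := by exact_mod_cast hz2
    omega
  rw [hz, hz1, Int.cast_one]

lemma inner_highest_eq_half {γ : V} (hγ : γ ∈ R.pos) (hpos : 0 < ⟪γ, R.highest⟫)
    (hne : γ ≠ R.highest) : ⟪γ, R.highest⟫ = ⟪R.highest, R.highest⟫ / 2 := by
  have := pairing_highest_eq_one hγ hpos hne
  rw [div_eq_one_iff_eq R.inner_highest_self_pos.ne'] at this
  linarith

lemma highest_sub_mem_pos {γ : V} (hγ : γ ∈ R.pos) (hpos : 0 < ⟪γ, R.highest⟫)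
    (hne : γ ≠ R.highest) : R.highest - γ ∈ R.pos := by
  rcases R.reflect_mem _ R.highest_mem γ hγ with h | h <;>
    rw [pairing_highest_eq_one hγ hpos hne, one_smul] at h
  · have := inner_highest_nonneg h
    rw [inner_sub_left, inner_highest_eq_half hγ hpos hne] at this
    linarith [R.inner_highest_self_pos]
  · rwa [neg_sub] at h

end SimpleRS

/-- for each `η ∈ H \ {θ}`, the element `θ − η` is a root lying in
`H \ {θ}`, and it is the unique `ν ∈ H \ {θ}` such that `η + ν` is a root. -/
theorem stmt14 {V : Type*} [NormedAddCommGroup V] [InnerProductSpace ℝ V]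
    (R : SimpleRS V) {η : V}
    (hη : η ∈ R.pos ∧ 0 < ⟪η, R.highest⟫ ∧ η ≠ R.highest) :
    (R.highest - η ∈ R.pos ∧ 0 < ⟪R.highest - η, R.highest⟫ ∧
      R.highest - η ≠ R.highest) ∧
    (η + (R.highest - η) ∈ R.pos ∨ -(η + (R.highest - η)) ∈ R.pos) ∧
    (∀ ν : V, (ν ∈ R.pos ∧ 0 < ⟪ν, R.highest⟫ ∧ ν ≠ R.highest) →
      (η + ν ∈ R.pos ∨ -(η + ν) ∈ R.pos) → ν = R.highest - η) := by
  obtain ⟨hη, hηθ, hηne⟩ := hη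
  have hθ := R.inner_highest_self_pos
  have hηhalf := R.inner_highest_eq_half hη hηθ hηne
  refine ⟨⟨R.highest_sub_mem_pos hη hηθ hηne, ?_, ?_⟩, Or.inl ?_, ?_⟩
  · rw [inner_sub_left]
    linarith
  · exact fun h => R.root_ne η hη (sub_eq_self.mp h)
  · rw [add_sub_cancel]
    exact R.highest_mem
  · rintro ν ⟨hν, hνθ, hνne⟩ hroot
    have hsum : ⟪η + ν, R.highest⟫ = ⟪R.highest, R.highest⟫ := by
      rw [inner_add_left, hηhalf, R.inner_highest_eq_half hν hνθ hνne]
      ring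
    rcases hroot with h | h
    · rw [← R.eq_highest_of_inner_eq h hsum, add_sub_cancel_left]
    · have := R.inner_highest_nonneg h
      rw [inner_neg_left, hsum] at this
      linarith
end
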